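/- arXiv:1604.00162 — 2 statements merged into one kernel-verified Lean document; each statement's English description precedes it below -/
import Mathlib

section
/- Let X be a type and let Σ be a family of finite subsets of X. Then for every choice set Θ over Σ there exists a ⊆-minimal choice set Θ' over Σ such that Θ' ⊆ Θ (i.e. Θ' ⊆ Θ, Θ' is a choice set over Σ, and no proper subset of Θ' is a choice set over Σ). -/
/-- A choice set over a family `Sg` of sets: a set whose intersection with every
member of `Sg` is nonempty. -/
def IsChoiceSet {X : Type*} (Sg : Set (Set X)) (Θ : Set X) : Prop :=
  ∀ Δ ∈ Sg, (Θ ∩ Δ).Nonempty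

/-- For a family `Sg` of finite subsets of `X`, below every choice set `Θ` over `Sg`
there is a `⊆`-minimal choice set `Θ'` over `Sg`. -/
theorem stmt0 {X : Type*} (Sg : Set (Set X)) (hfin : ∀ Δ ∈ Sg, Δ.Finite)
    (Θ : Set X) (hΘ : IsChoiceSet Sg Θ) :
    ∃ Θ' : Set X, Θ' ⊆ Θ ∧ IsChoiceSet Sg Θ' ∧
      ∀ Θ'' : Set X, Θ'' ⊂ Θ' → ¬ IsChoiceSet Sg Θ'' := by
  set S : Set (Set X) := {s | s ⊆ Θ ∧ IsChoiceSet Sg s} with hS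
  have H : ∀ c ⊆ S, IsChain (· ⊆ ·) c → c.Nonempty → ∃ lb ∈ S, ∀ s ∈ c, lb ⊆ s := by
    intro c hcS hchain ⟨s₀, hs₀⟩
    refine ⟨⋂₀ c, ⟨?_, ?_⟩, fun s hs => Set.sInter_subset_of_mem hs⟩
    · exact (Set.sInter_subset_of_mem hs₀).trans (hcS hs₀).1
    · intro Δ hΔ
      -- the family of traces s ∩ Δ for s ∈ c is a finite nonempty chain
      set F : Set (Set X) := (fun s => s ∩ Δ) '' c with hF
      have hFfin : F.Finite := by
        apply Set.Finite.subset (hfin Δ hΔ).finite_subsets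
        rintro _ ⟨s, _, rfl⟩
        exact Set.inter_subset_right
      have hFne : F.Nonempty := ⟨s₀ ∩ Δ, s₀, hs₀, rfl⟩
      obtain ⟨m, hmF, hmin⟩ : ∃ m ∈ F, ∀ m' ∈ F, id m' ≤ id m → id m = id m' := by
        obtain ⟨m, hmF, hmin⟩ := Set.Finite.exists_minimalFor id F hFfin hFne
        exact ⟨m, hmF, fun m' hm' h => le_antisymm (hmin hm' h) h⟩
      obtain ⟨t, htc, rfl⟩ := hmF
      have hmsub : ∀ s ∈ c, t ∩ Δ ⊆ s ∩ Δ := by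
        intro s hsc
        rcases hchain.total htc hsc with h | h
        · exact Set.inter_subset_inter_left Δ h
        · have : t ∩ Δ = s ∩ Δ := hmin (s ∩ Δ) ⟨s, hsc, rfl⟩
            (Set.inter_subset_inter_left Δ h)
          exact this.subset
      have hne : (t ∩ Δ).Nonempty := (hcS htc).2 Δ hΔ
      obtain ⟨x, hx⟩ := hne
      refine ⟨x, ?_, hx.2⟩
      exact Set.mem_sInter.2 fun s hsc => (hmsub s hsc hx).1
  obtain ⟨m, hmx, hmS, hmmin⟩ := zorn_superset_nonempty S H Θ ⟨le_refl Θ, hΘ⟩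
  refine ⟨m, hmS.1, hmS.2, fun Θ'' hsub hchoice => ?_⟩
  have := hmmin (y := Θ'') ⟨hsub.subset.trans hmS.1, hchoice⟩ hsub.subset
  exact hsub.not_subset this
end

section
/- Let Δ ⊆ Ab and let A ∈ 𝓛' be such that A is not a rule name n(r) for any rule r. If 𝒦ₙ ∪ Δ ⊢_ℛ A, then: (1) if A ∈ 𝓛, there exists an argument a ∈ Arg_Δ with conc(a) = A; (2) otherwise A is the contrary of a rule name n(r) for some defeasible rule r, and there exists an argument a ∈ Arg_Δ with conc(a) equal to a contrary of the consequent of r. -/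
universe u

/-- A rule with a finite list of antecedents and a consequent. -/
structure Rule (L : Type u) where
  ants : List L
  cons : L

/-- Argument trees: premise arguments, strict-rule arguments and
defeasible-rule arguments. -/
inductive ArgT (L : Type u) : Type u
  | prem : L → ArgT L
  | strict : List (ArgT L) → L → ArgT L
  | defs : List (ArgT L) → L → ArgT L

namespace ArgT

variable {L : Type u}

/-- The conclusion of an argument. -/
def conc : ArgT L → L
  | prem A => A
  | strict _ B => B
  | defs _ B => B

/-- The list of subarguments of an argument (including the argument itself). -/
def subArgs : ArgT L → List (ArgT L)
  | prem A => [prem A]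
  | strict args B => strict args B :: args.attach.flatMap (fun x => subArgs x.1)
  | defs args B => defs args B :: args.attach.flatMap (fun x => subArgs x.1)
  decreasing_by
    all_goals
      simp only [ArgT.strict.sizeOf_spec, ArgT.defs.sizeOf_spec]
      have := List.sizeOf_lt_of_mem x.2
      omega

/-- The set of premises occurring in an argument. -/
def prems (a : ArgT L) : Set L := {A | ArgT.prem A ∈ subArgs a}

/-- The argument `a` uses the defeasible rule `r` (i.e. some subargument of `a`
is a defeasible-rule argument applying `r` last). -/
def usesDefRule (r : Rule L) (a : ArgT L) : Prop :=
  ∃ (args : List (ArgT L)) (B : L),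
    ArgT.defs args B ∈ subArgs a ∧ r = Rule.mk (args.map conc) B

end ArgT

open ArgT

/-- Well-formed arguments over strict rules `S`, defeasible rules `D` and a
knowledge base `K`. -/
inductive IsArg (S D : Set (Rule L)) (K : Set L) : ArgT L → Prop
  | prem {A : L} (h : A ∈ K) : IsArg S D K (ArgT.prem A)
  | strict {args : List (ArgT L)} {B : L} (h : Rule.mk (args.map conc) B ∈ S)
      (hargs : ∀ a ∈ args, IsArg S D K a) : IsArg S D K (ArgT.strict args B)
  | defs {args : List (ArgT L)} {B : L} (h : Rule.mk (args.map conc) B ∈ D)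
      (hargs : ∀ a ∈ args, IsArg S D K a) : IsArg S D K (ArgT.defs args B)

/-- Derivability from `Γ` by finitely many applications of rules in `R`. -/
inductive Derives {X : Type u} (R : Set (Rule X)) (Γ : Set X) : X → Prop
  | prem {A : X} : A ∈ Γ → Derives R Γ A
  | app {r : Rule X} : r ∈ R → (∀ A ∈ r.ants, Derives R Γ A) → Derives R Γ r.cons

/-- The language `𝓛'` extending `𝓛` with a fresh name `n(r)` (tagged `false`) and
a fresh contrary of `n(r)` (tagged `true`) for each rule `r`. -/
def LExt (L : Type u) : Type u := L ⊕ (Rule L × Bool)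

/-- The fresh name `n(r)` of the rule `r`. -/
def rname {L : Type u} (r : Rule L) : LExt L := Sum.inr (r, false)

/-- The fresh contrary of the name `n(r)` of the rule `r`. -/
def rnameContrary {L : Type u} (r : Rule L) : LExt L := Sum.inr (r, true)

/-- Extension of the contrariness function `c` on `𝓛` to `𝓛'`: the contrary of the
fresh name `n(r)` is its fresh contrary. -/
def contraryExt {L : Type u} (c : L → L) : LExt L → LExt L
  | Sum.inl A => Sum.inl (c A)
  | Sum.inr (r, b) => Sum.inr (r, !b)

/-- The rule set `ℛ` of the translated assumption-based framework `ABF(AS)`: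
all strict rules, and for each defeasible rule `r : A₁,…,Aₙ ⇒ A` the rules
`n(r), A₁,…,Aₙ → A` and `Ā → contrary(n(r))`. -/
def RTrans {L : Type u} (S D : Set (Rule L)) (c : L → L) : Set (Rule (LExt L)) :=
  {r' | ∃ r ∈ S, r' = Rule.mk (r.ants.map Sum.inl) (Sum.inl r.cons)} ∪
  {r' | ∃ r ∈ D, r' = Rule.mk (rname r :: r.ants.map Sum.inl) (Sum.inl r.cons)} ∪
  {r' | ∃ r ∈ D, r' = Rule.mk [Sum.inl (c r.cons)] (rnameContrary r)}

/-- The assumptions of `ABF(AS)`: the defeasible assumptions `𝒦ₐ` together with the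
names of the defeasible rules. -/
def AbT {L : Type u} (D : Set (Rule L)) (Ka : Set L) : Set (LExt L) :=
  Sum.inl '' Ka ∪ {x | ∃ r ∈ D, x = rname r}

/-- `Arg_Δ`: the arguments using only defeasible assumptions in `Δ`, arbitrary
strict rules, and only defeasible rules `r` with `n(r) ∈ Δ`. -/
def ArgOf {L : Type u} (S D : Set (Rule L)) (Kn Ka : Set L) (Δ : Set (LExt L)) :
    Set (ArgT L) :=
  {a | IsArg S D (Kn ∪ Ka) a ∧
       (∀ A : L, A ∈ prems a → A ∈ Ka → Sum.inl A ∈ Δ) ∧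
       (∀ r : Rule L, usesDefRule r a → rname r ∈ Δ)}

/-- `Ab_𝒜`: the defeasible assumptions that are a premise or conclusion of some
member of `𝒜`, together with the names of the defeasible rules used in `𝒜`. -/
def AbOf {L : Type u} (D : Set (Rule L)) (Ka : Set L) (𝒜 : Set (ArgT L)) :
    Set (LExt L) :=
  {x | ∃ A ∈ Ka, x = Sum.inl A ∧ ∃ a ∈ 𝒜, A ∈ prems a ∨ conc a = A} ∪
  {x | ∃ r ∈ D, x = rname r ∧ ∃ a ∈ 𝒜, usesDefRule r a}

/-- The ASPIC⁺ attack relation `a ⇝ b`: undermining, rebut, or undercut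
(`Nm` is the naming function of the argumentation system). -/
def AttacksArg {L : Type u} (c : L → L) (Nm : Rule L → L) (Ka : Set L)
    (a b : ArgT L) : Prop :=
  (∃ B ∈ prems b, B ∈ Ka ∧ conc a = c B) ∨
  (∃ (args : List (ArgT L)) (B' : L),
      ArgT.defs args B' ∈ subArgs b ∧ conc a = c B') ∨
  (∃ (args : List (ArgT L)) (B' : L),
      ArgT.defs args B' ∈ subArgs b ∧ conc a = c (Nm (Rule.mk (args.map conc) B')))

section AspicSemantics

variable {L : Type u} (S D : Set (Rule L)) (Kn Ka : Set L) (c : L → L) (Nm : Rule L → L)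

/-- `Arg(AS,𝒦)`: all well-formed arguments. -/
def ArgsAll : Set (ArgT L) := {a | IsArg S D (Kn ∪ Ka) a}

/-- Conflict-freeness for sets of arguments. -/
def CfArgs (ℬ : Set (ArgT L)) : Prop :=
  ∀ a ∈ ℬ, ∀ b ∈ ℬ, ¬ AttacksArg c Nm Ka a b

/-- Admissibility for sets of arguments. -/
def AdmArgs (ℬ : Set (ArgT L)) : Prop :=
  ℬ ⊆ ArgsAll S D Kn Ka ∧ CfArgs Ka c Nm ℬ ∧
    ∀ a ∈ ℬ, ∀ x ∈ ArgsAll S D Kn Ka, AttacksArg c Nm Ka x a →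
      ∃ b ∈ ℬ, AttacksArg c Nm Ka b x

/-- Preferred extensions of the structured argumentation framework. -/
def PrefArgs (ℬ : Set (ArgT L)) : Prop :=
  AdmArgs S D Kn Ka c Nm ℬ ∧
    ∀ ℬ' : Set (ArgT L), AdmArgs S D Kn Ka c Nm ℬ' → ℬ ⊆ ℬ' → ℬ' = ℬ

/-- Stable extensions of the structured argumentation framework. -/
def StabArgs (ℬ : Set (ArgT L)) : Prop :=
  ℬ ⊆ ArgsAll S D Kn Ka ∧ CfArgs Ka c Nm ℬ ∧
    ∀ x ∈ ArgsAll S D Kn Ka, x ∉ ℬ → ∃ b ∈ ℬ, AttacksArg c Nm Ka b x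

end AspicSemantics

section AbaSemantics

variable {L : Type u} (S D : Set (Rule L)) (Kn Ka : Set L) (c : L → L)

/-- `Δ` is closed in `ABF(AS)`. -/
def ClosedB (Δ : Set (LExt L)) : Prop :=
  Δ = {B | B ∈ AbT D Ka ∧ Derives (RTrans S D c) (Sum.inl '' Kn ∪ Δ) B}

/-- `Δ` attacks the assumption `B` in `ABF(AS)`. -/
def AttacksB (Δ : Set (LExt L)) (B : LExt L) : Prop :=
  Derives (RTrans S D c) (Sum.inl '' Kn ∪ Δ) (contraryExt c B)

/-- `Δ` attacks the set of assumptions `Δ'` in `ABF(AS)`. -/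
def AttacksSetB (Δ Δ' : Set (LExt L)) : Prop :=
  ∃ B ∈ Δ', AttacksB S D Kn c Δ B

/-- `Δ` is conflict-free in `ABF(AS)`. -/
def CfB (Δ : Set (LExt L)) : Prop :=
  ∀ B ∈ AbT D Ka, ¬ (Derives (RTrans S D c) (Sum.inl '' Kn ∪ Δ) B ∧
      Derives (RTrans S D c) (Sum.inl '' Kn ∪ Δ) (contraryExt c B))

/-- `Δ` is admissible in `ABF(AS)`. -/
def AdmB (Δ : Set (LExt L)) : Prop :=
  Δ ⊆ AbT D Ka ∧ ClosedB S D Kn Ka c Δ ∧ CfB S D Kn Ka c Δ ∧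
    ∀ Δ' : Set (LExt L), Δ' ⊆ AbT D Ka → ClosedB S D Kn Ka c Δ' →
      AttacksSetB S D Kn c Δ' Δ → AttacksSetB S D Kn c Δ Δ'

/-- `Δ` is a preferred extension of `ABF(AS)`. -/
def PrefB (Δ : Set (LExt L)) : Prop :=
  AdmB S D Kn Ka c Δ ∧ ∀ Δ' : Set (LExt L), AdmB S D Kn Ka c Δ' → Δ ⊆ Δ' → Δ' = Δ

/-- `Δ` is a stable extension of `ABF(AS)`. -/
def StabB (Δ : Set (LExt L)) : Prop :=
  Δ ⊆ AbT D Ka ∧ ClosedB S D Kn Ka c Δ ∧ CfB S D Kn Ka c Δ ∧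
    ∀ B ∈ AbT D Ka \ Δ, AttacksB S D Kn c Δ B

end AbaSemantics

section Aux

variable {L : Type u} {S D : Set (Rule L)} {Kn Ka : Set L} {Δ : Set (LExt L)}

lemma mem_subArgs_strict {a : ArgT L} {args : List (ArgT L)} {B : L}
    (h : a ∈ subArgs (ArgT.strict args B)) :
    a = ArgT.strict args B ∨ ∃ b ∈ args, a ∈ subArgs b := by
  rw [subArgs] at h
  rcases List.mem_cons.1 h with h | h
  · exact Or.inl h
  · rcases List.mem_flatMap.1 h with ⟨x, hx, hax⟩
    exact Or.inr ⟨x.1, x.2, hax⟩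

lemma mem_subArgs_defs {a : ArgT L} {args : List (ArgT L)} {B : L}
    (h : a ∈ subArgs (ArgT.defs args B)) :
    a = ArgT.defs args B ∨ ∃ b ∈ args, a ∈ subArgs b := by
  rw [subArgs] at h
  rcases List.mem_cons.1 h with h | h
  · exact Or.inl h
  · rcases List.mem_flatMap.1 h with ⟨x, hx, hax⟩
    exact Or.inr ⟨x.1, x.2, hax⟩

lemma prem_mem_argOf (hdisj : Disjoint Kn Ka) {A : L}
    (h : (A ∈ Kn) ∨ (A ∈ Ka ∧ Sum.inl A ∈ Δ)) :
    ArgT.prem A ∈ ArgOf S D Kn Ka Δ ∧ conc (ArgT.prem A) = A := by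
  refine ⟨⟨IsArg.prem ?_, ?_, ?_⟩, rfl⟩
  · rcases h with h | h
    · exact Or.inl h
    · exact Or.inr h.1
  · intro B hB hBKa
    have : ArgT.prem B ∈ subArgs (ArgT.prem A) := hB
    rw [subArgs, List.mem_singleton] at this
    obtain rfl : B = A := by cases this; rfl
    rcases h with h | h
    · exact absurd hBKa (Set.disjoint_left.1 hdisj h)
    · exact h.2
  · intro r ⟨args', B', hmem, _⟩
    rw [subArgs, List.mem_singleton] at hmem
    cases hmem

lemma strict_mem_argOf {args : List (ArgT L)} {B : L}
    (hS : Rule.mk (args.map conc) B ∈ S)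
    (h : ∀ a ∈ args, a ∈ ArgOf S D Kn Ka Δ) :
    ArgT.strict args B ∈ ArgOf S D Kn Ka Δ := by
  refine ⟨IsArg.strict hS (fun a ha => (h a ha).1), ?_, ?_⟩
  · intro A hA hAKa
    rcases mem_subArgs_strict hA with h' | ⟨b, hb, hab⟩
    · cases h'
    · exact (h b hb).2.1 A hab hAKa
  · intro r ⟨args', B', hmem, hr⟩
    rcases mem_subArgs_strict hmem with h' | ⟨b, hb, hab⟩
    · cases h'
    · exact (h b hb).2.2 r ⟨args', B', hab, hr⟩

lemma defs_mem_argOf {args : List (ArgT L)} {B : L}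
    (hD : Rule.mk (args.map conc) B ∈ D)
    (hn : rname (Rule.mk (args.map conc) B) ∈ Δ)
    (h : ∀ a ∈ args, a ∈ ArgOf S D Kn Ka Δ) :
    ArgT.defs args B ∈ ArgOf S D Kn Ka Δ := by
  refine ⟨IsArg.defs hD (fun a ha => (h a ha).1), ?_, ?_⟩
  · intro A hA hAKa
    rcases mem_subArgs_defs hA with h' | ⟨b, hb, hab⟩
    · cases h'
    · exact (h b hb).2.1 A hab hAKa
  · intro r ⟨args', B', hmem, hr⟩
    rcases mem_subArgs_defs hmem with h' | ⟨b, hb, hab⟩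
    · obtain ⟨rfl, rfl⟩ : args' = args ∧ B' = B := by
        cases h'; exact ⟨rfl, rfl⟩
      subst hr; exact hn
    · exact (h b hb).2.2 r ⟨args', B', hab, hr⟩

lemma exists_args {l : List L}
    (h : ∀ B ∈ l, ∃ a ∈ ArgOf S D Kn Ka Δ, conc a = B) :
    ∃ args : List (ArgT L), (∀ a ∈ args, a ∈ ArgOf S D Kn Ka Δ) ∧
      args.map conc = l := by
  induction l with
  | nil => exact ⟨[], by simp⟩
  | cons B l ih =>
    obtain ⟨a, ha, hca⟩ := h B List.mem_cons_self
    obtain ⟨args, hargs, hmap⟩ := ih (fun B' hB' => h B' (List.mem_cons_of_mem _ hB'))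
    refine ⟨a :: args, ?_, by simp [hca, hmap]⟩
    intro b hb
    rcases List.mem_cons.1 hb with rfl | hb
    · exact ha
    · exact hargs b hb

end Aux

/-- If `𝒦ₙ ∪ Δ ⊢_ℛ A` in the translated ABF, where `A` is not a rule name, then:
(1) if `A ∈ 𝓛` there is an argument in `Arg_Δ` with conclusion `A`; (2) otherwise
`A` is the contrary of a rule name `n(r)` of a defeasible rule `r` and there is an
argument in `Arg_Δ` whose conclusion is the contrary of the consequent of `r`. -/
theorem stmt8 {L : Type u} (S D : Set (Rule L)) (Kn Ka : Set L)
    (hdisj : Disjoint Kn Ka) (c : L → L)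
    (Δ : Set (LExt L)) (hΔ : Δ ⊆ AbT D Ka) (A : LExt L)
    (hname : ∀ r : Rule L, A ≠ rname r)
    (hder : Derives (RTrans S D c) (Sum.inl '' Kn ∪ Δ) A) :
    (∀ A₀ : L, A = Sum.inl A₀ →
        ∃ a ∈ ArgOf S D Kn Ka Δ, ArgT.conc a = A₀) ∧
    ((¬ ∃ A₁ : L, A = Sum.inl A₁) →
        ∃ r ∈ D, A = rnameContrary r ∧
          ∃ a ∈ ArgOf S D Kn Ka Δ, ArgT.conc a = c r.cons) := by
  -- main induction, with a strengthened statement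
  have main : ∀ A : LExt L, Derives (RTrans S D c) (Sum.inl '' Kn ∪ Δ) A →
      (∀ A₀ : L, A = Sum.inl A₀ → ∃ a ∈ ArgOf S D Kn Ka Δ, ArgT.conc a = A₀) ∧
      (∀ r : Rule L, A = rnameContrary r →
        r ∈ D ∧ ∃ a ∈ ArgOf S D Kn Ka Δ, ArgT.conc a = c r.cons) ∧
      (∀ r : Rule L, A = rname r → rname r ∈ Δ) := by
    intro A hder
    induction hder with
    | @prem A hA =>
      rcases hA with ⟨A₀, hA₀, rfl⟩ | hA
      · refine ⟨?_, ?_, ?_⟩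
        · rintro A₁ h; obtain rfl : A₀ = A₁ := by injection h
          obtain ⟨h1, h2⟩ := prem_mem_argOf (S := S) (D := D) (Δ := Δ) hdisj
            (Or.inl hA₀)
          exact ⟨_, h1, h2⟩
        · rintro r h; cases h
        · rintro r h; cases h
      · rcases hΔ hA with ⟨A₀, hA₀, rfl⟩ | ⟨r, hrD, rfl⟩
        · refine ⟨?_, ?_, ?_⟩
          · rintro A₁ h; obtain rfl : A₀ = A₁ := by injection h
            obtain ⟨h1, h2⟩ := prem_mem_argOf (S := S) (D := D) (Δ := Δ) hdisj
              (Or.inr ⟨hA₀, hA⟩)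
            exact ⟨_, h1, h2⟩
          · rintro r h; cases h
          · rintro r h; cases h
        · refine ⟨?_, ?_, ?_⟩
          · rintro A₁ h; cases h
          · rintro r' h
            injection h with h; injection h with h1 h2; cases h2
          · rintro r' h
            obtain rfl : r = r' := by
              injection h with h; injection h with h1 h2
            exact hA
    | @app r' hr' hants ih =>
      rcases hr' with (⟨r, hrS, rfl⟩ | ⟨r, hrD, rfl⟩) | ⟨r, hrD, rfl⟩
      · -- strict rule
        refine ⟨?_, ?_, ?_⟩
        · rintro A₁ h
          obtain rfl : r.cons = A₁ := by injection h
          have hargs : ∀ B ∈ r.ants, ∃ a ∈ ArgOf S D Kn Ka Δ, conc a = B := by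
            intro B hB
            exact (ih (Sum.inl B) (List.mem_map_of_mem hB)).1 B rfl
          obtain ⟨args, hargs', hmap⟩ := exists_args hargs
          refine ⟨ArgT.strict args r.cons, strict_mem_argOf ?_ hargs', rfl⟩
          rw [hmap]; exact hrS
        · rintro r'' h; cases h
        · rintro r'' h; cases h
      · -- translated defeasible rule
        refine ⟨?_, ?_, ?_⟩
        · rintro A₁ h
          obtain rfl : r.cons = A₁ := by injection h
          have hname : rname r ∈ Δ :=
            (ih (rname r) List.mem_cons_self).2.2 r rfl
          have hargs : ∀ B ∈ r.ants, ∃ a ∈ ArgOf S D Kn Ka Δ, conc a = B := by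
            intro B hB
            exact (ih (Sum.inl B)
              (List.mem_cons_of_mem _ (List.mem_map_of_mem hB))).1 B rfl
          obtain ⟨args, hargs', hmap⟩ := exists_args hargs
          refine ⟨ArgT.defs args r.cons, defs_mem_argOf ?_ ?_ hargs', rfl⟩
          · rw [hmap]; exact hrD
          · rw [hmap]; exact hname
        · rintro r'' h; cases h
        · rintro r'' h; cases h
      · -- contrary rule
        refine ⟨?_, ?_, ?_⟩
        · rintro A₁ h; cases h
        · rintro r'' h
          obtain rfl : r = r'' := by
            injection h with h; injection h with h1 h2
          refine ⟨hrD, ?_⟩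
          exact (ih (Sum.inl (c r.cons)) (List.mem_singleton_self _)).1 _ rfl
        · rintro r'' h
          injection h with h; injection h with h1 h2; cases h2
  obtain ⟨h1, h2, h3⟩ := main A hder
  refine ⟨h1, ?_⟩
  intro hne
  match A, hne with
  | Sum.inl A₀, hne => exact absurd ⟨A₀, rfl⟩ hne
  | Sum.inr (r, false), _ => exact absurd rfl (hname r)
  | Sum.inr (r, true), _ =>
    obtain ⟨hrD, ha⟩ := h2 r rfl
    exact ⟨r, hrD, rfl, ha⟩
end
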